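/- Let 1 < r, r₁ < ∞ with 1/r > 1/r₁, define r₂ by 1/r₂ := 1/r − 1/r₁, and let r′, r₂′ denote conjugate exponents. Let ε > 0 and let φ : ℝ → ℝ be measurable. Then there exists a constant c > 0, depending only on r, r₁ and ε (in particular independent of φ), such that for every measurable function w : ℝ² → [0, ∞], (∫_ℝ (∫_ℝ w(ξ, τ) dτ)^{r₂′} dξ)^{1/r₂′} ≤ c · (∫∫_{ℝ²} ⟨ξ⟩^{(1/r₁ + ε) r′} ⟨τ + φ(ξ)⟩^{(1/r + ε) r′} w(ξ, τ)^{r′} dξ dτ)^{1/r′}, all quantities understood in [0, ∞]. -/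

import Mathlib

/-!
Hölder in `τ` against the weight `⟨τ + φ ξ⟩^{1/r+ε}` bounds `∫ w(ξ, τ) dτ` by `G(ξ)^{1/r'}`, where
`G(ξ) = ∫ ⟨τ + φ ξ⟩^{(1/r+ε)r'} w(ξ, τ)^{r'} dτ`; the constant `‖⟨·⟩^{-(1/r+ε)}‖_{L^r}` does not
depend on `φ` because Lebesgue measure is translation invariant. Then the three-exponent Hölder
inequality in `ξ`, with `1/r₂' = 1/r₁ + 1/r'` and weight `⟨ξ⟩^{1/r₁+ε}`, followed by Tonelli gives
the claim. Both weight integrals are finite because `(1/r + ε) r > 1` and `(1/r₁ + ε) r₁ > 1`.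
-/

open MeasureTheory

/-- Japanese bracket ⟨x⟩ = (1 + x²)^{1/2}. -/
noncomputable def jap (x : ℝ) : ℝ := Real.sqrt (1 + x ^ 2)

open scoped ENNReal

lemma jap_pos (x : ℝ) : 0 < jap x := Real.sqrt_pos.mpr (by positivity)

@[fun_prop]
lemma measurable_jap : Measurable jap := by
  unfold jap; fun_prop

lemma lintegral_ofReal_jap_rpow_neg_lt_top {t : ℝ} (ht : 1 < t) :
    ∫⁻ x : ℝ, ENNReal.ofReal (jap x ^ (-t)) < ∞ := by
  have hjap : ∀ x : ℝ, jap x ^ (-t) = (1 + ‖x‖ ^ 2) ^ (-t / 2) := fun x => by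
    rw [jap, Real.norm_eq_abs, sq_abs, Real.sqrt_eq_rpow, ← Real.rpow_mul (by positivity)]
    ring_nf
  have hint := (integrable_rpow_neg_one_add_norm_sq (E := ℝ) (μ := volume) (by simpa using ht)).2
  refine lt_of_eq_of_lt (lintegral_congr fun x => ?_) hint
  rw [hjap, Real.enorm_of_nonneg (by positivity)]

section WeightedHolder

variable {α : Type*} [MeasurableSpace α] {μ : Measure α}

lemma lintegral_rpow_rpow_le_mul_of_le {s : ℝ} (hs : 0 < s) {a : ℝ≥0∞} (ha : a ≠ ∞)
    {f g : α → ℝ≥0∞} (hfg : ∀ x, f x ≤ a * g x) :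
    (∫⁻ x, f x ^ s ∂μ) ^ (1 / s) ≤ a * (∫⁻ x, g x ^ s ∂μ) ^ (1 / s) := calc
  (∫⁻ x, f x ^ s ∂μ) ^ (1 / s) ≤ (∫⁻ x, a ^ s * g x ^ s ∂μ) ^ (1 / s) := by
    gcongr with x
    rw [← ENNReal.mul_rpow_of_nonneg _ _ hs.le]
    exact ENNReal.rpow_le_rpow (hfg x) hs.le
  _ = a * (∫⁻ x, g x ^ s ∂μ) ^ (1 / s) := by
    rw [lintegral_const_mul' _ _ (ENNReal.rpow_ne_top_of_nonneg hs.le ha),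
      ENNReal.mul_rpow_of_nonneg _ _ (by positivity), ← ENNReal.rpow_mul,
      mul_one_div_cancel hs.ne', ENNReal.rpow_one]

lemma lintegral_rpow_le_weighted {s p q σ : ℝ} (hs : 0 < s) (hsp : s < p)
    (hspq : 1 / s = 1 / p + 1 / q) {v : α → ℝ} (hv : Measurable v) (hv_pos : ∀ x, 0 < v x)
    {f : α → ℝ≥0∞} (hf : AEMeasurable f μ) :
    (∫⁻ x, f x ^ s ∂μ) ^ (1 / s) ≤
      (∫⁻ x, ENNReal.ofReal (v x ^ (-(σ * p))) ∂μ) ^ (1 / p) *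
        (∫⁻ x, ENNReal.ofReal (v x ^ (σ * q)) * f x ^ q ∂μ) ^ (1 / q) := by
  have hq : 0 < q := by
    have : 1 / p < 1 / s := one_div_lt_one_div_of_lt hs hsp
    exact one_div_pos.mp (by linarith)
  have hsplit : (fun x => ENNReal.ofReal (v x ^ (-σ))) *
      ((fun x => ENNReal.ofReal (v x ^ σ)) * f) = f := by
    ext x
    rw [Pi.mul_apply, Pi.mul_apply, ← mul_assoc, ← ENNReal.ofReal_mul (by positivity [hv_pos x]),
      ← Real.rpow_add (hv_pos x), neg_add_cancel, Real.rpow_zero, ENNReal.ofReal_one, one_mul]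
  have hholder := ENNReal.lintegral_Lp_mul_le_Lq_mul_Lr hs hsp hspq μ
    (hv.pow_const (-σ)).ennreal_ofReal.aemeasurable
    ((hv.pow_const σ).ennreal_ofReal.aemeasurable.mul hf)
  rw [hsplit] at hholder
  convert hholder using 4
  · funext x
    rw [ENNReal.ofReal_rpow_of_pos (Real.rpow_pos_of_pos (hv_pos x) _),
      ← Real.rpow_mul (hv_pos x).le, neg_mul]
  · funext x
    rw [Pi.mul_apply, ENNReal.mul_rpow_of_nonneg _ _ hq.le,
      ENNReal.ofReal_rpow_of_pos (Real.rpow_pos_of_pos (hv_pos x) _),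
      ← Real.rpow_mul (hv_pos x).le]

end WeightedHolder

lemma lintegral_le_jap_translate_weighted {r r' σ : ℝ} (hr : 1 < r)
    (hrr' : 1 / r + 1 / r' = 1) (c : ℝ) {g : ℝ → ℝ≥0∞} (hg : AEMeasurable g) :
    ∫⁻ τ, g τ ≤ (∫⁻ τ, ENNReal.ofReal (jap τ ^ (-(σ * r)))) ^ (1 / r) *
      (∫⁻ τ, ENNReal.ofReal (jap (τ + c) ^ (σ * r')) * g τ ^ r') ^ (1 / r') := by
  have hholder := lintegral_rpow_le_weighted (s := 1) (σ := σ) one_pos hr (by rw [hrr', div_one])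
    (measurable_jap.comp (measurable_add_const c)) (fun τ => jap_pos _) hg
  simp only [ENNReal.rpow_one, div_one, Function.comp_apply] at hholder
  rwa [lintegral_add_right_eq_self (fun τ => ENNReal.ofReal (jap τ ^ (-(σ * r))))] at hholder

lemma lintegral_rpow_lintegral_le_jap_weighted {r r' p s σ σ₁ : ℝ} (hr : 1 < r)
    (hrr' : 1 / r + 1 / r' = 1) (hσ : 1 < σ * r) (hs : 0 < s) (hsp : s < p)
    (hspr' : 1 / s = 1 / p + 1 / r') {φ : ℝ → ℝ} (hφ : Measurable φ) {w : ℝ × ℝ → ℝ≥0∞}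
    (hw : Measurable w) :
    (∫⁻ ξ, (∫⁻ τ, w (ξ, τ)) ^ s) ^ (1 / s) ≤
      (∫⁻ τ, ENNReal.ofReal (jap τ ^ (-(σ * r)))) ^ (1 / r) *
        (∫⁻ ξ, ENNReal.ofReal (jap ξ ^ (-(σ₁ * p)))) ^ (1 / p) *
          (∫⁻ q : ℝ × ℝ, ENNReal.ofReal (jap q.1 ^ (σ₁ * r') * jap (q.2 + φ q.1) ^ (σ * r')) *
            w q ^ r') ^ (1 / r') := by
  have hr' : 0 < r' := one_div_pos.mp (by linarith [(div_lt_one (by linarith)).mpr hr])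
  have ha : (∫⁻ τ, ENNReal.ofReal (jap τ ^ (-(σ * r)))) ^ (1 / r) ≠ ∞ :=
    ENNReal.rpow_ne_top_of_nonneg (by positivity) (lintegral_ofReal_jap_rpow_neg_lt_top hσ).ne
  set G : ℝ → ℝ≥0∞ := fun ξ => ∫⁻ τ, ENNReal.ofReal (jap (τ + φ ξ) ^ (σ * r')) * w (ξ, τ) ^ r'
  have hG : Measurable G := Measurable.lintegral_prod_right'
    (f := fun q => ENNReal.ofReal (jap (q.2 + φ q.1) ^ (σ * r')) * w q ^ r') (by fun_prop)
  have hG_eq : ∫⁻ ξ, ENNReal.ofReal (jap ξ ^ (σ₁ * r')) * (G ξ ^ (1 / r')) ^ r' =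
      ∫⁻ q : ℝ × ℝ, ENNReal.ofReal (jap q.1 ^ (σ₁ * r') * jap (q.2 + φ q.1) ^ (σ * r')) *
        w q ^ r' := by
    rw [Measure.volume_eq_prod, lintegral_prod _ (by fun_prop)]
    refine lintegral_congr fun ξ => ?_
    rw [← ENNReal.rpow_mul, one_div_mul_cancel hr'.ne', ENNReal.rpow_one,
      ← lintegral_const_mul' _ _ ENNReal.ofReal_ne_top]
    refine lintegral_congr fun τ => ?_
    rw [ENNReal.ofReal_mul (by positivity [jap_pos ξ]), mul_assoc]
  calc (∫⁻ ξ, (∫⁻ τ, w (ξ, τ)) ^ s) ^ (1 / s)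
      ≤ (∫⁻ τ, ENNReal.ofReal (jap τ ^ (-(σ * r)))) ^ (1 / r) *
          (∫⁻ ξ, (G ξ ^ (1 / r')) ^ s) ^ (1 / s) :=
        lintegral_rpow_rpow_le_mul_of_le hs ha fun ξ =>
          lintegral_le_jap_translate_weighted hr hrr' (φ ξ)
            (hw.comp measurable_prodMk_left).aemeasurable
    _ ≤ _ := by
        rw [mul_assoc, ← hG_eq]
        gcongr
        exact lintegral_rpow_le_weighted hs hsp hspr' measurable_jap jap_pos
          (hG.pow_const _).aemeasurable

theorem stmt_10_general (r r₁ r₂ r' r₂' ε : ℝ)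
    (hr : 1 < r) (hr₁ : 1 < r₁) (hr₂ : 1 / r₂ = 1 / r - 1 / r₁)
    (hr' : 1 / r + 1 / r' = 1) (hr₂' : 1 / r₂ + 1 / r₂' = 1) (hε : 0 < ε) :
    ∃ c : ℝ, 0 < c ∧ ∀ φ : ℝ → ℝ, Measurable φ → ∀ w : ℝ × ℝ → ENNReal, Measurable w →
      (∫⁻ ξ : ℝ, (∫⁻ τ : ℝ, w (ξ, τ)) ^ r₂') ^ (1 / r₂') ≤
        ENNReal.ofReal c *
          (∫⁻ q : ℝ × ℝ,
            ENNReal.ofReal (jap q.1 ^ ((1 / r₁ + ε) * r') *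
              jap (q.2 + φ q.1) ^ ((1 / r + ε) * r')) * w q ^ r') ^ (1 / r') := by
  have hr'_pos : 0 < 1 / r' := by linarith [(div_lt_one (by linarith)).mpr hr]
  have hr₂'_eq : 1 / r₂' = 1 / r₁ + 1 / r' := by linarith
  have hr₂'_pos : 0 < r₂' := one_div_pos.mp (by rw [hr₂'_eq]; positivity)
  have hr₂'_lt : r₂' < r₁ :=
    lt_of_one_div_lt_one_div (by linarith) (by rw [hr₂'_eq]; linarith)
  have one_lt_exponent {t : ℝ} (ht : 0 < t) : 1 < (1 / t + ε) * t := by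
    rw [add_mul, one_div_mul_cancel ht.ne']; nlinarith
  set a := (∫⁻ τ, ENNReal.ofReal (jap τ ^ (-((1 / r + ε) * r)))) ^ (1 / r)
  set b := (∫⁻ ξ, ENNReal.ofReal (jap ξ ^ (-((1 / r₁ + ε) * r₁)))) ^ (1 / r₁)
  have hab : a * b ≠ ∞ := ENNReal.mul_ne_top
    (ENNReal.rpow_ne_top_of_nonneg (by positivity)
      (lintegral_ofReal_jap_rpow_neg_lt_top (one_lt_exponent (by linarith))).ne)
    (ENNReal.rpow_ne_top_of_nonneg (by positivity)
      (lintegral_ofReal_jap_rpow_neg_lt_top (one_lt_exponent (by linarith))).ne)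
  refine ⟨max (a * b).toReal 1, by positivity, fun φ hφ w hw => ?_⟩
  refine (lintegral_rpow_lintegral_le_jap_weighted (σ₁ := 1 / r₁ + ε) hr hr'
    (one_lt_exponent (by linarith)) hr₂'_pos hr₂'_lt hr₂'_eq hφ hw).trans ?_
  gcongr
  exact (ENNReal.ofReal_toReal hab).symm.le.trans (ENNReal.ofReal_le_ofReal (le_max_left _ _))

/-- Embedding (2.6), Fourier-side:
(∫_ξ (∫_τ w dτ)^{r₂′} dξ)^{1/r₂′} ≤ c (∫∫ ⟨ξ⟩^{(1/r₁+ε)r′} ⟨τ+φ(ξ)⟩^{(1/r+ε)r′} w^{r′})^{1/r′},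
where 1/r₂ = 1/r − 1/r₁, with c independent of φ. -/
theorem stmt_10 (r r₁ r₂ r' r₂' ε : ℝ)
    (hr : 1 < r) (hr₁ : 1 < r₁) (h : 1 / r > 1 / r₁) (hr₂ : 1 / r₂ = 1 / r - 1 / r₁)
    (hr' : 1 / r + 1 / r' = 1) (hr₂' : 1 / r₂ + 1 / r₂' = 1) (hε : 0 < ε) :
    ∃ c : ℝ, 0 < c ∧ ∀ φ : ℝ → ℝ, Measurable φ → ∀ w : ℝ × ℝ → ENNReal, Measurable w →
      (∫⁻ ξ : ℝ, (∫⁻ τ : ℝ, w (ξ, τ)) ^ r₂') ^ (1 / r₂') ≤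
        ENNReal.ofReal c *
          (∫⁻ q : ℝ × ℝ,
            ENNReal.ofReal (jap q.1 ^ ((1 / r₁ + ε) * r') *
              jap (q.2 + φ q.1) ^ ((1 / r + ε) * r')) * w q ^ r') ^ (1 / r') :=
  stmt_10_general r r₁ r₂ r' r₂' ε hr hr₁ hr₂ hr' hr₂' hε
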